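/- arXiv:1802.09505 — 5 statements merged into one kernel-verified Lean document; each statement's English description precedes it below -/
import Mathlib

section
/- If two closed disks of radii r_1 and r_2 intersect in more than one point, and together they cover an interval of length L on a line, then there exist radii r_1' < r_1 and r_2' < r_2 with 2r_1' + 2r_2' ≥ L. Consequently, an optimal (minimum total area) covering of an interval by disks contains no two overlapping disks. -/
/-!
A disk `closedBall q r` meets the x-axis inside `[q 0 - r, q 0 + r]`. If two closed disks share
two points, their centers are at distance `< r₁ + r₂` (at distance `≥ r₁ + r₂` a common point is
forced onto the segment between the centers, by strict convexity), so their traces on the axis lie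
in one interval of length `ℓ < 2 (r₁ + r₂)`. This gives the first claim. For the second, the two
disks can be replaced by two disks of radius `ℓ / 4` centered on the axis, which still cover that
interval, and `2 (ℓ / 4)² < (r₁ + r₂)² / 2 ≤ r₁² + r₂²`.
-/

/-- The embedding of the x-axis into the Euclidean plane. -/
noncomputable def pt (x : ℝ) : EuclideanSpace ℝ (Fin 2) :=
  (WithLp.equiv 2 (Fin 2 → ℝ)).symm ![x, 0]

open Metric Set Function

lemma pos_of_nontrivial_closedBall {α : Type*} [MetricSpace α] {x : α} {r : ℝ}
    (h : (closedBall x r).Nontrivial) : 0 < r :=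
  lt_of_not_ge fun hr => h.not_subsingleton (subsingleton_closedBall x hr)

section StrictConvex

variable {E : Type*} [NormedAddCommGroup E] [NormedSpace ℝ E] [StrictConvexSpace ℝ E]

lemma eq_lineMap_of_mem_closedBall_inter {q₁ q₂ z : E} {r₁ r₂ : ℝ}
    (hpos : 0 < dist q₁ q₂) (hd : r₁ + r₂ ≤ dist q₁ q₂)
    (hz : z ∈ closedBall q₁ r₁ ∩ closedBall q₂ r₂) :
    z = AffineMap.lineMap q₁ q₂ (r₁ / dist q₁ q₂) := by
  obtain ⟨h₁, h₂⟩ := hz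
  rw [mem_closedBall'] at h₁
  rw [mem_closedBall] at h₂
  have htri := dist_triangle q₁ z q₂
  apply eq_lineMap_of_dist_eq_mul_of_dist_eq_mul
  · field_simp
    linarith
  · field_simp
    linarith

lemma dist_lt_add_of_nontrivial_closedBall_inter {q₁ q₂ : E} {r₁ r₂ : ℝ}
    (h : (closedBall q₁ r₁ ∩ closedBall q₂ r₂).Nontrivial) : dist q₁ q₂ < r₁ + r₂ := by
  have hr₁ := pos_of_nontrivial_closedBall (h.mono inter_subset_left)
  have hr₂ := pos_of_nontrivial_closedBall (h.mono inter_subset_right)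
  by_contra! hd
  exact h.not_subsingleton fun x hx y hy =>
    (eq_lineMap_of_mem_closedBall_inter (by linarith) hd hx).trans
      (eq_lineMap_of_mem_closedBall_inter (by linarith) hd hy).symm

end StrictConvex

lemma max_add_sub_min_sub_lt {c₁ c₂ r₁ r₂ : ℝ} (hr₁ : 0 < r₁) (hr₂ : 0 < r₂)
    (h : |c₁ - c₂| < r₁ + r₂) :
    max (c₁ + r₁) (c₂ + r₂) - min (c₁ - r₁) (c₂ - r₂) < 2 * (r₁ + r₂) := by
  rw [abs_lt] at h
  rcases le_total (c₁ + r₁) (c₂ + r₂) with h₁ | h₁ <;>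
    rcases le_total (c₁ - r₁) (c₂ - r₂) with h₂ | h₂ <;>
    simp only [max_eq_left, max_eq_right, min_eq_left, min_eq_right, h₁, h₂] <;> linarith

lemma Icc_subset_closedBall_union_closedBall (m M : ℝ) :
    Icc m M ⊆ closedBall (m + (M - m) / 4) ((M - m) / 4) ∪
      closedBall (M - (M - m) / 4) ((M - m) / 4) := by
  rintro x ⟨hm, hM⟩
  simp only [mem_union, Real.closedBall_eq_Icc, mem_Icc]
  by_cases hx : x ≤ (m + M) / 2
  · left; constructor <;> linarith
  · right; constructor <;> linarith

lemma isometry_pt : Isometry pt := by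
  refine Isometry.of_dist_eq fun x y => ?_
  simp [EuclideanSpace.dist_eq, pt, Real.dist_eq, Real.sqrt_sq_eq_abs]

lemma preimage_pt_closedBall_subset (q : EuclideanSpace ℝ (Fin 2)) (r : ℝ) :
    pt ⁻¹' closedBall q r ⊆ Icc (q 0 - r) (q 0 + r) := fun x hx => by
  rw [← Real.closedBall_eq_Icc, mem_closedBall]
  exact (PiLp.dist_apply_le (pt x) q 0).trans hx

lemma exists_Icc_of_nontrivial_closedBall_inter {q₁ q₂ : EuclideanSpace ℝ (Fin 2)} {r₁ r₂ : ℝ}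
    (h : (closedBall q₁ r₁ ∩ closedBall q₂ r₂).Nontrivial) :
    ∃ m M, m ≤ M ∧ M - m < 2 * (r₁ + r₂) ∧
      pt ⁻¹' (closedBall q₁ r₁ ∪ closedBall q₂ r₂) ⊆ Icc m M := by
  have hr₁ := pos_of_nontrivial_closedBall (h.mono inter_subset_left)
  have hr₂ := pos_of_nontrivial_closedBall (h.mono inter_subset_right)
  have hc : |q₁ 0 - q₂ 0| < r₁ + r₂ :=
    (PiLp.dist_apply_le q₁ q₂ 0).trans_lt (dist_lt_add_of_nontrivial_closedBall_inter h)
  refine ⟨min (q₁ 0 - r₁) (q₂ 0 - r₂), max (q₁ 0 + r₁) (q₂ 0 + r₂),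
    (min_le_left _ _).trans ((by linarith : q₁ 0 - r₁ ≤ q₁ 0 + r₁).trans (le_max_left _ _)),
    max_add_sub_min_sub_lt hr₁ hr₂ hc, ?_⟩
  rw [preimage_union]
  exact union_subset
    ((preimage_pt_closedBall_subset q₁ r₁).trans <|
      Icc_subset_Icc (min_le_left _ _) (le_max_left _ _))
    ((preimage_pt_closedBall_subset q₂ r₂).trans <|
      Icc_subset_Icc (min_le_right _ _) (le_max_right _ _))

lemma sub_lt_of_Icc_subset_preimage_pt_union {q₁ q₂ : EuclideanSpace ℝ (Fin 2)} {r₁ r₂ a b : ℝ}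
    (h : (closedBall q₁ r₁ ∩ closedBall q₂ r₂).Nontrivial) (hab : a ≤ b)
    (hcov : Icc a b ⊆ pt ⁻¹' (closedBall q₁ r₁ ∪ closedBall q₂ r₂)) :
    b - a < 2 * (r₁ + r₂) := by
  obtain ⟨m, M, -, hlen, hsub⟩ := exists_Icc_of_nontrivial_closedBall_inter h
  obtain ⟨hma, hbM⟩ := (Icc_subset_Icc_iff hab).1 (hcov.trans hsub)
  linarith

def CoversAxis {ι : Type*} (s : Set ℝ) (q : ι → EuclideanSpace ℝ (Fin 2)) (r : ι → ℝ) : Prop :=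
  ∀ x ∈ s, ∃ i, pt x ∈ closedBall (q i) (r i)

lemma CoversAxis.update_pair {ι : Type*} [DecidableEq ι] {s : Set ℝ}
    {q : ι → EuclideanSpace ℝ (Fin 2)} {r : ι → ℝ} {i j : ι} {m M : ℝ}
    (hcov : CoversAxis s q r) (hij : i ≠ j)
    (hsub : pt ⁻¹' (closedBall (q i) (r i) ∪ closedBall (q j) (r j)) ⊆ Icc m M) :
    CoversAxis s (update (update q i (pt (m + (M - m) / 4))) j (pt (M - (M - m) / 4)))
      (update (update r i ((M - m) / 4)) j ((M - m) / 4)) := by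
  intro x hx
  obtain ⟨k, hk⟩ := hcov x hx
  by_cases hkij : k = i ∨ k = j
  · have hxI : x ∈ Icc m M := hsub (by rcases hkij with rfl | rfl <;> simp [hk])
    rcases Icc_subset_closedBall_union_closedBall m M hxI with h | h
    · exact ⟨i, by simpa [update_of_ne hij, ← isometry_pt.preimage_closedBall] using h⟩
    · exact ⟨j, by simpa [← isometry_pt.preimage_closedBall] using h⟩
  · obtain ⟨hki, hkj⟩ := not_or.1 hkij
    exact ⟨k, by simpa [update_of_ne hki, update_of_ne hkj] using hk⟩

lemma sum_update_update_add {ι M : Type*} [Fintype ι] [DecidableEq ι] [AddCommGroup M]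
    (f : ι → M) {i j : ι} (hij : i ≠ j) (a b : M) :
    ∑ k, update (update f i a) j b k + f i + f j = ∑ k, f k + a + b := by
  have hi : i ∈ Finset.univ \ {j} := by simp [hij]
  rw [Finset.sum_update_of_mem (Finset.mem_univ j), Finset.sum_update_of_mem hi,
    Finset.sum_eq_add_sum_sdiff_singleton_of_mem (Finset.mem_univ j) f,
    Finset.sum_eq_add_sum_sdiff_singleton_of_mem hi f]
  abel

lemma CoversAxis.exists_sum_sq_lt {ι : Type*} [Fintype ι] {s : Set ℝ}
    {q : ι → EuclideanSpace ℝ (Fin 2)} {r : ι → ℝ} (hr : ∀ k, 0 ≤ r k)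
    (hcov : CoversAxis s q r) {i j : ι} (hij : i ≠ j)
    (hover : (closedBall (q i) (r i) ∩ closedBall (q j) (r j)).Nontrivial) :
    ∃ (q' : ι → EuclideanSpace ℝ (Fin 2)) (r' : ι → ℝ),
      (∀ k, 0 ≤ r' k) ∧ CoversAxis s q' r' ∧ ∑ k, r' k ^ 2 < ∑ k, r k ^ 2 := by
  classical
  obtain ⟨m, M, hmM, hlen, hsub⟩ := exists_Icc_of_nontrivial_closedBall_inter hover
  set ρ := (M - m) / 4 with hρ_def
  have hρ : 0 ≤ ρ := by linarith
  have hρ_sq : 2 * ρ ^ 2 < r i ^ 2 + r j ^ 2 := by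
    have h2ρ : 2 * ρ < r i + r j := by linarith
    nlinarith [sq_nonneg (r i - r j), mul_self_lt_mul_self (by linarith) h2ρ]
  refine ⟨_, update (update r i ρ) j ρ, fun k => ?_, hcov.update_pair hij hsub, ?_⟩
  · rcases eq_or_ne k j with rfl | hkj
    · simpa using hρ
    rcases eq_or_ne k i with rfl | hki
    · simpa [update_of_ne hkj] using hρ
    · simpa [update_of_ne hkj, update_of_ne hki] using hr k
  · have hsq : (· ^ 2) ∘ update (update r i ρ) j ρ =
        update (update ((· ^ 2) ∘ r) i (ρ ^ 2)) j (ρ ^ 2) := by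
      simp only [comp_update]
    have hsum := sum_update_update_add ((· ^ 2) ∘ r) hij (ρ ^ 2) (ρ ^ 2)
    rw [← hsq] at hsum
    simp only [comp_apply] at hsum
    linarith

theorem stmt6 :
    (∀ (q1 q2 : EuclideanSpace ℝ (Fin 2)) (r1 r2 a L : ℝ), 0 ≤ L →
      (∃ x y : EuclideanSpace ℝ (Fin 2), x ≠ y ∧
        x ∈ Metric.closedBall q1 r1 ∩ Metric.closedBall q2 r2 ∧
        y ∈ Metric.closedBall q1 r1 ∩ Metric.closedBall q2 r2) →
      (∀ x : ℝ, a ≤ x → x ≤ a + L →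
        pt x ∈ Metric.closedBall q1 r1 ∪ Metric.closedBall q2 r2) →
      ∃ r1' r2' : ℝ, r1' < r1 ∧ r2' < r2 ∧ L ≤ 2 * r1' + 2 * r2') ∧
    (∀ (n : ℕ) (a L : ℝ), 0 < L →
      ∀ (q : Fin n → EuclideanSpace ℝ (Fin 2)) (r : Fin n → ℝ),
      (∀ i, 0 ≤ r i) →
      (∀ x : ℝ, a ≤ x → x ≤ a + L → ∃ i, pt x ∈ Metric.closedBall (q i) (r i)) →
      (∀ (q' : Fin n → EuclideanSpace ℝ (Fin 2)) (r' : Fin n → ℝ),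
        (∀ i, 0 ≤ r' i) →
        (∀ x : ℝ, a ≤ x → x ≤ a + L → ∃ i, pt x ∈ Metric.closedBall (q' i) (r' i)) →
        ∑ i, r i ^ 2 ≤ ∑ i, r' i ^ 2) →
      ∀ i j : Fin n, i ≠ j →
        ¬ ∃ x y : EuclideanSpace ℝ (Fin 2), x ≠ y ∧
          x ∈ Metric.closedBall (q i) (r i) ∩ Metric.closedBall (q j) (r j) ∧
          y ∈ Metric.closedBall (q i) (r i) ∩ Metric.closedBall (q j) (r j)) := by
  constructor
  · intro q1 q2 r1 r2 a L hL ⟨x, y, hxy, hx, hy⟩ hcov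
    have hlen := sub_lt_of_Icc_subset_preimage_pt_union ⟨x, hx, y, hy, hxy⟩
      (le_add_of_nonneg_right hL) fun z (hz : z ∈ Icc a (a + L)) => hcov z hz.1 hz.2
    refine ⟨r1 - (2 * (r1 + r2) - L) / 4, r2 - (2 * (r1 + r2) - L) / 4, ?_, ?_, ?_⟩ <;> linarith
  · intro n a L _ q r hr hcov hopt i j hij ⟨x, y, hxy, hx, hy⟩
    obtain ⟨q', r', hr', hcov', hlt⟩ := CoversAxis.exists_sum_sq_lt hr
      (s := Icc a (a + L)) (fun z hz => hcov z hz.1 hz.2) hij ⟨x, hx, y, hy, hxy⟩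
    exact (hopt q' r' hr' fun z h₁ h₂ => hcov' z ⟨h₁, h₂⟩).not_gt hlt
end

section
/- In any set of pairwise non-overlapping disks centered at collinear points p_1 < ... < p_n with radii r_1, ..., r_n (so r_i + r_{i+1} ≤ p_{i+1} − p_i for all i), the total squared radius sum Σ r_i^2 is at most (Σ_{i=1}^{n−1} (p_{i+1} − p_i))^2 = (p_n − p_1)^2. Moreover, modifying any feasible solution by setting r_1 = p_2 − p_1 and r_2 = 0 (keeping other radii) yields another feasible solution with total squared radius sum at least as large. -/
/-!
Telescoping the constraints `r i + r (i+1) ≤ p (i+1) - p i` bounds the sum of the radii by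
`p (n-1) - p 0`, and for nonnegative radii `∑ r i ^ 2 ≤ (∑ r i) ^ 2`. For the modification, the
first two disks fit into the first gap, so `r 0 ^ 2 + r 1 ^ 2 ≤ (r 0 + r 1) ^ 2 ≤ (p 1 - p 0) ^ 2`,
and the second gap only loses the radius `r 1 ≥ 0`.
-/

open Finset

/-- Radii `r 0, …, r (n-1)` of pairwise non-overlapping disks centred at `p 0, …, p (n-1)`. -/
def IsFeasibleRadii (n : ℕ) (p r : ℕ → ℝ) : Prop :=
  (∀ i, i < n → 0 ≤ r i) ∧ ∀ i, i + 1 < n → r i + r (i + 1) ≤ p (i + 1) - p i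

def fillFirstGap (p r : ℕ → ℝ) : ℕ → ℝ :=
  fun j => if j = 0 then p 1 - p 0 else if j = 1 then 0 else r j

namespace IsFeasibleRadii

variable {n : ℕ} {p r : ℕ → ℝ}

theorem sum_range_add_two_le (h : IsFeasibleRadii n p r) {m : ℕ} (hm : m + 1 < n) :
    ∑ i ∈ range (m + 2), r i ≤ p (m + 1) - p 0 := by
  induction m with
  | zero => simpa [sum_range_succ] using h.2 0 hm
  | succ m ih =>
    have := ih (by omega)
    have := h.2 (m + 1) hm
    have := h.1 (m + 1) (by omega)
    rw [sum_range_succ]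
    linarith

theorem sum_le (h : IsFeasibleRadii n p r) (hn : 2 ≤ n) :
    ∑ i ∈ range n, r i ≤ p (n - 1) - p 0 := by
  obtain ⟨m, rfl⟩ := Nat.exists_eq_add_of_le' hn
  exact h.sum_range_add_two_le (by omega)

theorem sum_sq_le (h : IsFeasibleRadii n p r) (hn : 2 ≤ n) :
    ∑ i ∈ range n, r i ^ 2 ≤ (p (n - 1) - p 0) ^ 2 :=
  calc ∑ i ∈ range n, r i ^ 2
      ≤ (∑ i ∈ range n, r i) ^ 2 :=
        sum_sq_le_sq_sum_of_nonneg fun i hi => h.1 i (mem_range.mp hi)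
    _ ≤ (p (n - 1) - p 0) ^ 2 :=
        pow_le_pow_left₀ (sum_nonneg fun i hi => h.1 i (mem_range.mp hi)) (h.sum_le hn) 2

theorem isFeasibleRadii_fillFirstGap (h : IsFeasibleRadii n p r) (hn : 2 ≤ n) :
    IsFeasibleRadii n p (fillFirstGap p r) := by
  have hgap : r 0 + r 1 ≤ p 1 - p 0 := h.2 0 (by omega)
  have hr0 := h.1 0 (by omega)
  have hr1 := h.1 1 (by omega)
  refine ⟨fun i hi => ?_, fun i hi => ?_⟩
  · rcases i with _ | _ | i
    · show 0 ≤ p 1 - p 0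
      linarith
    · exact le_rfl
    · exact h.1 (i + 2) hi
  · rcases i with _ | _ | i
    · show p 1 - p 0 + 0 ≤ p 1 - p 0
      linarith
    · show 0 + r 2 ≤ p 2 - p 1
      linarith [h.2 1 hi]
    · exact h.2 (i + 2) hi

theorem sum_sq_le_fillFirstGap (h : IsFeasibleRadii n p r) (hn : 2 ≤ n) :
    ∑ i ∈ range n, r i ^ 2 ≤ ∑ i ∈ range n, fillFirstGap p r i ^ 2 := by
  obtain ⟨m, rfl⟩ := Nat.exists_eq_add_of_le' hn
  have hgap : r 0 + r 1 ≤ p 1 - p 0 := h.2 0 (by omega)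
  have hr0 := h.1 0 (by omega)
  have hr1 := h.1 1 (by omega)
  have hfirst : r 0 ^ 2 + r 1 ^ 2 ≤ (p 1 - p 0) ^ 2 :=
    calc r 0 ^ 2 + r 1 ^ 2 ≤ (r 0 + r 1) ^ 2 := by nlinarith
      _ ≤ (p 1 - p 0) ^ 2 := pow_le_pow_left₀ (by positivity) hgap 2
  simp only [sum_range_succ' _ (m + 1), sum_range_succ' _ m]
  show _ ≤ ∑ i ∈ range m, r (i + 2) ^ 2 + 0 ^ 2 + (p 1 - p 0) ^ 2
  linarith

end IsFeasibleRadii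

theorem stmt12_general (n : ℕ) (hn : 3 ≤ n) (p r : ℕ → ℝ)
    (hr : ∀ i, i < n → 0 ≤ r i)
    (hfeas : ∀ i, i + 1 < n → r i + r (i + 1) ≤ p (i + 1) - p i) :
    (∑ i ∈ Finset.range n, r i ^ 2 ≤ (p (n - 1) - p 0) ^ 2) ∧
    (∀ r' : ℕ → ℝ,
      r' = (fun j => if j = 0 then p 1 - p 0 else if j = 1 then 0 else r j) →
      (∀ i, i < n → 0 ≤ r' i) ∧
      (∀ i, i + 1 < n → r' i + r' (i + 1) ≤ p (i + 1) - p i) ∧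
      ∑ i ∈ Finset.range n, r i ^ 2 ≤ ∑ i ∈ Finset.range n, r' i ^ 2) := by
  have h : IsFeasibleRadii n p r := ⟨hr, hfeas⟩
  have hn2 : 2 ≤ n := by omega
  refine ⟨h.sum_sq_le hn2, ?_⟩
  rintro r' rfl
  obtain ⟨hr', hfeas'⟩ := h.isFeasibleRadii_fillFirstGap hn2
  exact ⟨hr', hfeas', h.sum_sq_le_fillFirstGap hn2⟩

theorem stmt12 (n : ℕ) (hn : 3 ≤ n) (p r : ℕ → ℝ)
    (hp : ∀ i, i + 1 < n → p i < p (i + 1))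
    (hr : ∀ i, i < n → 0 ≤ r i)
    (hfeas : ∀ i, i + 1 < n → r i + r (i + 1) ≤ p (i + 1) - p i) :
    (∑ i ∈ Finset.range n, r i ^ 2 ≤ (p (n - 1) - p 0) ^ 2) ∧
    (∀ r' : ℕ → ℝ,
      r' = (fun j => if j = 0 then p 1 - p 0 else if j = 1 then 0 else r j) →
      (∀ i, i < n → 0 ≤ r' i) ∧
      (∀ i, i + 1 < n → r' i + r' (i + 1) ≤ p (i + 1) - p i) ∧
      ∑ i ∈ Finset.range n, r i ^ 2 ≤ ∑ i ∈ Finset.range n, r' i ^ 2) :=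
  stmt12_general n hn p r hr hfeas
end

section
/- In an optimal (maximum total squared-radius) assignment of non-overlapping disks centered at collinear points p_1 < ... < p_n (constraints r_i + r_{i+1} ≤ p_{i+1} − p_i, r_i ≥ 0), any disk D_i with 0 < r_i, 1 < i < n, that is neither full (r_i = min(p_i − p_{i−1}, p_{i+1} − p_i)) nor zero satisfies r_i < max(r_{i−1}, r_{i+1}). -/
/-!
Suppose the middle disk `b = r i` is at least as large as both neighbours `a` and `c`, and is not
full. Moving an amount `t` of radius from a neighbour onto `b` changes `Σ r_k²` by
`2t(b - a) + 2t² > 0`, and growing `b` into free space increases it too. Since `b` is strictly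
shorter than both gaps, one of these local moves (which only shrink the neighbours, so all other
constraints survive) is always available, contradicting optimality.
-/

open Finset Function

theorem Finset.sum_comp_update {ι β M : Type*} [DecidableEq ι] [AddCommGroup M]
    {s : Finset ι} {i : ι} (hi : i ∈ s) (g : β → M) (f : ι → β) (v : β) :
    ∑ k ∈ s, g (update f i v k) = ∑ k ∈ s, g (f k) - g (f i) + g v := by
  rw [← add_sum_erase s _ hi, ← add_sum_erase s _ hi, update_self,
    sum_congr rfl fun k hk => by rw [update_of_ne (ne_of_mem_erase hk)]]
  abel

theorem exists_sq_sum_gt_of_le_of_lt {a b c L R : ℝ} (ha : 0 ≤ a) (hc : 0 ≤ c)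
    (hab : a ≤ b) (hcb : c ≤ b) (hL : a + b ≤ L) (hR : b + c ≤ R) (hbL : b < L) (hbR : b < R) :
    ∃ x y z : ℝ, 0 ≤ x ∧ x ≤ a ∧ 0 ≤ y ∧ 0 ≤ z ∧ z ≤ c ∧ x + y ≤ L ∧ y + z ≤ R ∧
      a ^ 2 + b ^ 2 + c ^ 2 < x ^ 2 + y ^ 2 + z ^ 2 := by
  wlog hac : a ≤ c generalizing a c L R
  · obtain ⟨x, y, z, hx, hxc, hy, hz, hza, hxy, hyz, hgt⟩ :=
      this hc ha hcb hab (by linarith) (by linarith) hbR hbL (le_of_not_ge hac)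
    exact ⟨z, y, x, hz, hza, hy, hx, hxc, by linarith, by linarith, by linarith⟩
  set δ := min (L - a - b) (R - b - c)
  have hδL : δ ≤ L - a - b := min_le_left _ _
  have hδR : δ ≤ R - b - c := min_le_right _ _
  have hδ : 0 ≤ δ := le_min (by linarith) (by linarith)
  by_cases had : 0 < a + δ
  · -- `b` absorbs all of `a` and the common slack `δ`; `c` shrinks by `a` to keep the right gap.
    refine ⟨0, b + a + δ, c - a, le_rfl, ha, by linarith, by linarith, by linarith,
      by linarith, by linarith, ?_⟩
    nlinarith [mul_le_mul_of_nonneg_left hcb ha]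
  · -- Now `a = 0` and the right gap is tight: shift radius from `c` onto `b`.
    have ha0 : a = 0 := by linarith
    have hR0 : R - b - c = 0 := by
      rcases min_choice (L - a - b) (R - b - c) with h | h <;> linarith
    set t := min c (L - b)
    have ht : 0 < t := lt_min (by linarith) (by linarith)
    refine ⟨a, b + t, c - t, ha, le_rfl, by linarith, by linarith [min_le_left c (L - b)],
      by linarith, by linarith [min_le_right c (L - b)], by linarith, ?_⟩
    nlinarith

namespace CollinearDisks

def Feasible (n : ℕ) (p r : ℕ → ℝ) : Prop :=
  (∀ k, k < n → 0 ≤ r k) ∧ ∀ k, k + 1 < n → r k + r (k + 1) ≤ p (k + 1) - p k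

def IsOptimal (n : ℕ) (p r : ℕ → ℝ) : Prop :=
  Feasible n p r ∧ ∀ r', Feasible n p r' → ∑ k ∈ range n, r' k ^ 2 ≤ ∑ k ∈ range n, r k ^ 2

theorem Feasible.update_three {n j : ℕ} {p r : ℕ → ℝ} (h : Feasible n p r) {x y z : ℝ}
    (hx : 0 ≤ x) (hxr : x ≤ r j) (hy : 0 ≤ y) (hz : 0 ≤ z) (hzr : z ≤ r (j + 2))
    (hxy : x + y ≤ p (j + 1) - p j) (hyz : y + z ≤ p (j + 2) - p (j + 1)) :
    Feasible n p (update (update (update r j x) (j + 1) y) (j + 2) z) := by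
  refine ⟨fun k hk => ?_, fun k hk => ?_⟩
  · simp only [update_apply]
    split_ifs <;> first | assumption | exact h.1 k hk
  · have := h.2 k hk
    simp only [update_apply]
    split_ifs <;> subst_vars <;> first | omega | linarith

theorem IsOptimal.sq_add_sq_add_sq_le {n j : ℕ} {p r : ℕ → ℝ} (h : IsOptimal n p r)
    (hj : j + 2 < n) {x y z : ℝ} (hx : 0 ≤ x) (hxr : x ≤ r j) (hy : 0 ≤ y) (hz : 0 ≤ z)
    (hzr : z ≤ r (j + 2)) (hxy : x + y ≤ p (j + 1) - p j)
    (hyz : y + z ≤ p (j + 2) - p (j + 1)) :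
    x ^ 2 + y ^ 2 + z ^ 2 ≤ r j ^ 2 + r (j + 1) ^ 2 + r (j + 2) ^ 2 := by
  have hsum := h.2 _ (h.1.update_three hx hxr hy hz hzr hxy hyz)
  have mem : ∀ k ≤ j + 2, k ∈ range n := fun k hk => mem_range.2 (by omega)
  rw [sum_comp_update (mem (j + 2) le_rfl) (· ^ 2),
    sum_comp_update (mem (j + 1) (by omega)) (· ^ 2),
    sum_comp_update (mem j (by omega)) (· ^ 2)] at hsum
  simp (disch := omega) only [update_of_ne] at hsum
  linarith

end CollinearDisks

theorem stmt17_general (n : ℕ) (p r : ℕ → ℝ)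
    (hr : ∀ k, k < n → 0 ≤ r k)
    (hfeas : ∀ k, k + 1 < n → r k + r (k + 1) ≤ p (k + 1) - p k)
    (hopt : ∀ r' : ℕ → ℝ, (∀ k, k < n → 0 ≤ r' k) →
      (∀ k, k + 1 < n → r' k + r' (k + 1) ≤ p (k + 1) - p k) →
      ∑ k ∈ Finset.range n, r' k ^ 2 ≤ ∑ k ∈ Finset.range n, r k ^ 2)
    (i : ℕ) (hi0 : 0 < i) (hi1 : i < n - 1)
    (hnotfull1 : r i ≠ p i - p (i - 1)) (hnotfull2 : r i ≠ p (i + 1) - p i) :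
    r i < max (r (i - 1)) (r (i + 1)) := by
  obtain ⟨j, rfl⟩ : ∃ j, i = j + 1 := ⟨i - 1, by omega⟩
  have hj : j + 2 < n := by omega
  have hoptimal : CollinearDisks.IsOptimal n p r := ⟨⟨hr, hfeas⟩, fun r' h => hopt r' h.1 h.2⟩
  rw [Nat.add_sub_cancel] at hnotfull1 ⊢
  by_contra! hmax
  have hL := hfeas j (by omega)
  have hR := hfeas (j + 1) hj
  obtain ⟨x, y, z, hx, hxr, hy, hz, hzr, hxy, hyz, hgt⟩ := exists_sq_sum_gt_of_le_of_lt
    (hr j (by omega)) (hr (j + 2) hj) (le_of_max_le_left hmax) (le_of_max_le_right hmax)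
    hL hR (lt_of_le_of_ne (by linarith [hr j (by omega)]) hnotfull1)
    (lt_of_le_of_ne (by linarith [hr (j + 2) hj]) hnotfull2)
  exact hgt.not_ge (hoptimal.sq_add_sq_add_sq_le hj hx hxr hy hz hzr hxy hyz)

theorem stmt17 (n : ℕ) (hn : 3 ≤ n) (p r : ℕ → ℝ)
    (hp : ∀ k, k + 1 < n → p k < p (k + 1))
    (hr : ∀ k, k < n → 0 ≤ r k)
    (hfeas : ∀ k, k + 1 < n → r k + r (k + 1) ≤ p (k + 1) - p k)
    (hopt : ∀ r' : ℕ → ℝ, (∀ k, k < n → 0 ≤ r' k) →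
      (∀ k, k + 1 < n → r' k + r' (k + 1) ≤ p (k + 1) - p k) →
      ∑ k ∈ Finset.range n, r' k ^ 2 ≤ ∑ k ∈ Finset.range n, r k ^ 2)
    (i : ℕ) (hi0 : 0 < i) (hi1 : i < n - 1)
    (hpos : 0 < r i)
    (hnotfull1 : r i ≠ p i - p (i - 1)) (hnotfull2 : r i ≠ p (i + 1) - p i) :
    r i < max (r (i - 1)) (r (i + 1)) :=
  stmt17_general n p r hr hfeas hopt i hi0 hi1 hnotfull1 hnotfull2
end

section
/- For any n ≥ 1 and interval [a,b] with points p_1 = a < p_2 < ... < p_n = b, the minimum total area over point-interval coverages (n disks covering [a,b] where disk i contains p_i) is at least π(b−a)^2/(4n), with equality attained if and only if the equal-disk (unit-disk) covering is valid, i.e., p_i ∈ [a + (i−1)(b−a)/n, a + i(b−a)/n] for all i. -/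
/-- A point-interval coverage for points `p` on the interval `[a,b]`:
`n` closed disks (given by centers `q` and radii `rad`) covering `[a,b]`,
with the `i`-th disk containing the point `p i`. -/
def IsPIC (n : ℕ) (a b : ℝ) (p : Fin n → ℝ)
    (q : Fin n → EuclideanSpace ℝ (Fin 2)) (rad : Fin n → ℝ) : Prop :=
  (∀ i, 0 ≤ rad i) ∧
  (∀ x : ℝ, x ∈ Set.Icc a b → ∃ i, pt x ∈ Metric.closedBall (q i) (rad i)) ∧
  (∀ i, pt (p i) ∈ Metric.closedBall (q i) (rad i))

/-!
Projected to the x-axis, the disks become intervals of total length `2 ∑ rᵢ` covering `[a, b]`,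
so `∑ rᵢ ≥ (b - a) / 2`, and Cauchy–Schwarz gives `∑ rᵢ² ≥ (b - a)² / (4n)`.
In the equality case Cauchy–Schwarz forces every radius to be `D / 2` with `D = (b - a) / n`, so
the projected intervals have total length exactly `b - a`. The intervals with centers left of
`cᵢ` cover `[a, cᵢ - D/2]` and those right of it cover `[cᵢ + D/2, b]`; tightness of the total
length makes both coverings exact, so `cᵢ = a + D/2 + kᵢ D` with `kᵢ` the number of centers
left of `cᵢ`, and the centers are distinct. As `p` is increasing and `pᵢ` lies in the `i`-th
interval, the centers are increasing too, hence `kᵢ = i`.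
-/

open Finset Metric

lemma dist_le_dist_pt (x : ℝ) (q : EuclideanSpace ℝ (Fin 2)) :
    dist x (q 0) ≤ dist (pt x) q := by
  rw [EuclideanSpace.dist_eq, Fin.sum_univ_two]
  exact Real.le_sqrt_of_sq_le (le_add_of_nonneg_right (sq_nonneg _))

lemma dist_pt_pt (x y : ℝ) : dist (pt x) (pt y) = dist x y := by
  rw [EuclideanSpace.dist_eq, Fin.sum_univ_two]
  simp [pt]

lemma pt_mem_closedBall_pt {x y r : ℝ} :
    pt x ∈ closedBall (pt y) r ↔ x ∈ closedBall y r := by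
  rw [mem_closedBall, mem_closedBall, dist_pt_pt]

lemma sub_le_sum_two_mul_of_Ioo_subset {ι : Type*} {s : Finset ι} {c r : ι → ℝ} {u v : ℝ}
    (hr : ∀ i ∈ s, 0 ≤ r i) (h : Set.Ioo u v ⊆ ⋃ i ∈ s, closedBall (c i) (r i)) :
    v - u ≤ ∑ i ∈ s, 2 * r i := by
  have hvol : ENNReal.ofReal (v - u) ≤ ENNReal.ofReal (∑ i ∈ s, 2 * r i) := calc
    ENNReal.ofReal (v - u) = MeasureTheory.volume (Set.Ioo u v) := Real.volume_Ioo.symm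
    _ ≤ MeasureTheory.volume (⋃ i ∈ s, closedBall (c i) (r i)) := MeasureTheory.measure_mono h
    _ ≤ ∑ i ∈ s, MeasureTheory.volume (closedBall (c i) (r i)) :=
      MeasureTheory.measure_biUnion_finset_le s _
    _ = ENNReal.ofReal (∑ i ∈ s, 2 * r i) := by
      simp_rw [Real.volume_closedBall]
      rw [ENNReal.ofReal_sum_of_nonneg fun i hi => by linarith [hr i hi]]
  rcases ENNReal.ofReal_le_ofReal_iff'.1 hvol with h | h
  · exact h
  · linarith [sum_nonneg fun i hi => mul_nonneg zero_le_two (hr i hi)]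

section CauchySchwarz

variable {ι : Type*} {s : Finset ι} {r : ι → ℝ} {L : ℝ}

lemma sq_div_card_le_sum_sq (hL : 0 ≤ L) (hLr : L ≤ ∑ i ∈ s, r i) :
    L ^ 2 / #s ≤ ∑ i ∈ s, r i ^ 2 :=
  div_le_of_le_mul₀ (Nat.cast_nonneg _) (sum_nonneg fun _ _ => sq_nonneg _) <|
    (pow_le_pow_left₀ hL hLr 2).trans
      (mul_comm (∑ i ∈ s, r i ^ 2) #s ▸ sq_sum_le_card_mul_sum_sq)

lemma eq_div_card_of_sum_sq_le (hL : 0 ≤ L) (hLr : L ≤ ∑ i ∈ s, r i)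
    (hsq : ∑ i ∈ s, r i ^ 2 ≤ L ^ 2 / #s) : ∀ i ∈ s, r i = L / #s := by
  rcases s.eq_empty_or_nonempty with rfl | hs
  · simp
  set m := L / #s with hm
  have hcard : (0 : ℝ) < #s := by exact_mod_cast hs.card_pos
  have hm0 : 0 ≤ m := div_nonneg hL hcard.le
  have hdev : ∑ i ∈ s, (r i - m) ^ 2 ≤ 0 := calc
    ∑ i ∈ s, (r i - m) ^ 2 = ∑ i ∈ s, r i ^ 2 - 2 * m * ∑ i ∈ s, r i + #s * m ^ 2 := by
      simp only [sub_sq, sum_add_distrib, sum_sub_distrib, sum_const, nsmul_eq_mul, ← sum_mul,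
        ← mul_sum]
      ring
    _ ≤ L ^ 2 / #s - 2 * m * L + #s * m ^ 2 := by gcongr
    _ = 0 := by rw [hm]; field_simp; ring
  intro i hi
  have := (sum_eq_zero_iff_of_nonneg fun j _ => sq_nonneg (r j - m)).1
    (hdev.antisymm (sum_nonneg fun j _ => sq_nonneg _)) i hi
  linarith [pow_eq_zero_iff two_ne_zero |>.1 this]

end CauchySchwarz

lemma card_lt_add_card_eq_add_card_gt {ι α : Type*} [Fintype ι] [LinearOrder α] (c : ι → α)
    (x : α) : #{j | c j < x} + #{j | c j = x} + #{j | x < c j} = Fintype.card ι := by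
  classical
  rw [← card_union_of_disjoint, ← card_union_of_disjoint, ← filter_or, ← filter_or]
  · rw [filter_true_of_mem fun j _ => or_assoc.2 (lt_trichotomy (c j) x), card_univ]
  all_goals
    simp only [disjoint_left, mem_union, mem_filter]
    grind

section TightCover

variable {ι : Type*} [Fintype ι] {a b D : ℝ} {c : ι → ℝ}

lemma min_sub_le_card_lt_mul (hD : 0 ≤ D)
    (hcover : ∀ x ∈ Set.Icc a b, ∃ j, x ∈ closedBall (c j) (D / 2)) (t : ℝ) :
    min (t - D / 2) b - a ≤ #{j | c j < t} * D := by
  have hsub : Set.Ioo a (min (t - D / 2) b) ⊆ ⋃ j ∈ ({j | c j < t} : Finset ι),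
      closedBall (c j) (D / 2) := by
    rintro x ⟨hax, hxt⟩
    rw [lt_min_iff] at hxt
    obtain ⟨j, hj⟩ := hcover x ⟨hax.le, hxt.2.le⟩
    refine Set.mem_biUnion ?_ hj
    rw [Real.closedBall_eq_Icc] at hj
    simp only [coe_filter, mem_univ, true_and, Set.mem_ofPred_eq]
    linarith [hj.1]
  simpa [mul_div_cancel₀] using sub_le_sum_two_mul_of_Ioo_subset (fun _ _ => by positivity) hsub

lemma sub_max_le_card_gt_mul (hD : 0 ≤ D)
    (hcover : ∀ x ∈ Set.Icc a b, ∃ j, x ∈ closedBall (c j) (D / 2)) (t : ℝ) :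
    b - max (t + D / 2) a ≤ #{j | t < c j} * D := by
  have hsub : Set.Ioo (max (t + D / 2) a) b ⊆ ⋃ j ∈ ({j | t < c j} : Finset ι),
      closedBall (c j) (D / 2) := by
    rintro x ⟨htx, hxb⟩
    rw [max_lt_iff] at htx
    obtain ⟨j, hj⟩ := hcover x ⟨htx.2.le, hxb.le⟩
    refine Set.mem_biUnion ?_ hj
    rw [Real.closedBall_eq_Icc] at hj
    simp only [coe_filter, mem_univ, true_and, Set.mem_ofPred_eq]
    linarith [hj.2]
  simpa [mul_div_cancel₀] using sub_le_sum_two_mul_of_Ioo_subset (fun _ _ => by positivity) hsub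

lemma center_eq_of_tight_cover (hD : 0 < D)
    (hcover : ∀ x ∈ Set.Icc a b, ∃ j, x ∈ closedBall (c j) (D / 2))
    (hlen : b - a = Fintype.card ι * D) (i : ι) :
    c i = a + D / 2 + #{j | c j < c i} * D ∧ #{j | c j = c i} = 1 := by
  have hpart : (#{j | c j < c i} + #{j | c j = c i} + #{j | c i < c j} : ℝ) =
      Fintype.card ι := by
    exact_mod_cast card_lt_add_card_eq_add_card_gt c (c i)
  have hself : (1 : ℝ) ≤ #{j | c j = c i} := by exact_mod_cast card_pos.2 ⟨i, by simp⟩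
  have hA := min_sub_le_card_lt_mul hD.le hcover (c i)
  have hB := sub_max_le_card_gt_mul hD.le hcover (c i)
  -- An interval entirely to the right of `b` (or left of `a`) would leave `[a, b]` to the
  -- other `card ι - 1` intervals, which are too short to cover it.
  have hA' : c i - D / 2 - a ≤ #{j | c j < c i} * D := by
    rcases min_cases (c i - D / 2) b with ⟨hm, -⟩ | ⟨hm, -⟩ <;> rw [hm] at hA
    · exact hA
    · nlinarith
  have hB' : b - (c i + D / 2) ≤ #{j | c i < c j} * D := by
    rcases max_cases (c i + D / 2) a with ⟨hm, -⟩ | ⟨hm, -⟩ <;> rw [hm] at hB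
    · exact hB
    · nlinarith
  have hone : (#{j | c j = c i} : ℝ) = 1 := by nlinarith
  exact ⟨by nlinarith, by exact_mod_cast hone⟩

lemma injective_of_tight_cover (hD : 0 < D)
    (hcover : ∀ x ∈ Set.Icc a b, ∃ j, x ∈ closedBall (c j) (D / 2))
    (hlen : b - a = Fintype.card ι * D) : Function.Injective c := fun i j hij =>
  card_le_one.1 (center_eq_of_tight_cover hD hcover hlen i).2.le i (by simp) j (by simp [hij])

end TightCover

lemma strictMono_of_tight_cover {n : ℕ} {a b D : ℝ} {c p : Fin n → ℝ} (hD : 0 < D)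
    (hcover : ∀ x ∈ Set.Icc a b, ∃ j, x ∈ closedBall (c j) (D / 2))
    (hlen : b - a = Fintype.card (Fin n) * D)
    (hp : StrictMono p) (hpc : ∀ i, p i ∈ closedBall (c i) (D / 2)) : StrictMono c := by
  intro i j hij
  by_contra! hji
  have hlt : c j < c i := hji.lt_of_ne ((injective_of_tight_cover hD hcover hlen).ne hij.ne')
  have hcard : #{l | c l < c j} < #{l | c l < c i} := by
    refine card_lt_card ((ssubset_iff_of_subset fun l => ?_).2 ⟨j, by simp [hlt], by simp⟩)
    simp only [mem_filter, mem_univ, true_and]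
    exact fun hl => hl.trans hlt
  have hcenter := center_eq_of_tight_cover hD hcover hlen
  have hgap : c j + D ≤ c i := by
    rw [(hcenter i).1, (hcenter j).1]
    nlinarith [show (#{l | c l < c j} : ℝ) + 1 ≤ #{l | c l < c i} by exact_mod_cast hcard]
  have hpi := hpc i
  have hpj := hpc j
  rw [Real.closedBall_eq_Icc] at hpi hpj
  linarith [hp hij, hpi.1, hpj.2]

lemma mem_Icc_of_tight_cover {n : ℕ} {a b D : ℝ} {c p : Fin n → ℝ} (hD : 0 < D)
    (hcover : ∀ x ∈ Set.Icc a b, ∃ j, x ∈ closedBall (c j) (D / 2)) (hlen : b - a = n * D)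
    (hp : StrictMono p) (hpc : ∀ i, p i ∈ closedBall (c i) (D / 2)) (i : Fin n) :
    p i ∈ Set.Icc (a + (i : ℕ) * D) (a + ((i : ℕ) + 1) * D) := by
  rw [← Fintype.card_fin n] at hlen
  have hrank : #{j | c j < c i} = i := by
    simp_rw [(strictMono_of_tight_cover hD hcover hlen hp hpc).lt_iff_lt, filter_gt_eq_Iio,
      Fin.card_Iio]
  have hpi := hpc i
  rw [Real.closedBall_eq_Icc, (center_eq_of_tight_cover hD hcover hlen i).1, hrank] at hpi
  constructor <;> linarith [hpi.1, hpi.2]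

lemma exists_fin_mem_Icc {n : ℕ} (hn : 0 < n) {a D x : ℝ} (hD : 0 < D)
    (hx : x ∈ Set.Icc a (a + n * D)) :
    ∃ i : Fin n, x ∈ Set.Icc (a + (i : ℕ) * D) (a + ((i : ℕ) + 1) * D) := by
  set t := (x - a) / D
  have ht : t * D = x - a := div_mul_cancel₀ _ hD.ne'
  set m := min ⌊t⌋₊ (n - 1) with hm
  have hlow : (m : ℝ) ≤ t :=
    (Nat.cast_le.2 (min_le_left _ _)).trans (Nat.floor_le (div_nonneg (sub_nonneg.2 hx.1) hD.le))
  have hup : x - a ≤ (m + 1) * D := by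
    rcases le_total ⌊t⌋₊ (n - 1) with h | h
    · rw [hm, min_eq_left h]
      nlinarith [Nat.lt_floor_add_one t]
    · rw [hm, min_eq_right h, Nat.cast_sub hn]
      push_cast
      linarith [hx.2]
  refine ⟨⟨m, by omega⟩, ?_, ?_⟩ <;> dsimp only <;> nlinarith

namespace IsPIC

variable {n : ℕ} {a b : ℝ} {p : Fin n → ℝ} {q : Fin n → EuclideanSpace ℝ (Fin 2)}
  {rad : Fin n → ℝ}

lemma exists_mem_closedBall (h : IsPIC n a b p q rad) {x : ℝ} (hx : x ∈ Set.Icc a b) :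
    ∃ i, x ∈ closedBall (q i 0) (rad i) :=
  (h.2.1 x hx).imp fun i hi => (dist_le_dist_pt x (q i)).trans hi

lemma mem_closedBall (h : IsPIC n a b p q rad) (i : Fin n) : p i ∈ closedBall (q i 0) (rad i) :=
  (dist_le_dist_pt (p i) (q i)).trans (h.2.2 i)

lemma sub_le_sum_rad (h : IsPIC n a b p q rad) : (b - a) / 2 ≤ ∑ i, rad i := by
  have hsub : Set.Ioo a b ⊆ ⋃ i ∈ univ, closedBall (q i 0) (rad i) := fun x hx => by
    obtain ⟨i, hi⟩ := h.exists_mem_closedBall (Set.Ioo_subset_Icc_self hx)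
    exact Set.mem_biUnion (mem_univ i) hi
  have := sub_le_sum_two_mul_of_Ioo_subset (fun i _ => h.1 i) hsub
  rw [← mul_sum] at this
  linarith

lemma sq_div_le_sum_sq (h : IsPIC n a b p q rad) (hab : a ≤ b) :
    (b - a) ^ 2 / (4 * n) ≤ ∑ i, rad i ^ 2 := by
  have := sq_div_card_le_sum_sq (div_nonneg (sub_nonneg.2 hab) zero_le_two) h.sub_le_sum_rad
  rw [card_univ, Fintype.card_fin] at this
  convert this using 1
  ring

lemma rad_eq_of_sum_sq_le (h : IsPIC n a b p q rad) (hab : a ≤ b)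
    (hsq : ∑ i, rad i ^ 2 ≤ (b - a) ^ 2 / (4 * n)) (i : Fin n) : rad i = (b - a) / n / 2 := by
  have hsq' : ∑ i, rad i ^ 2 ≤ ((b - a) / 2) ^ 2 / #(univ : Finset (Fin n)) := by
    rw [card_univ, Fintype.card_fin]
    convert hsq using 1
    ring
  rw [eq_div_card_of_sum_sq_le (div_nonneg (sub_nonneg.2 hab) zero_le_two) h.sub_le_sum_rad hsq'
    i (mem_univ i), card_univ, Fintype.card_fin]
  ring

end IsPIC

lemma isPIC_of_mem_Icc {n : ℕ} (hn : 0 < n) {a b D : ℝ} (hD : 0 < D) (hlen : b - a = n * D)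
    {p : Fin n → ℝ}
    (hp : ∀ i : Fin n, p i ∈ Set.Icc (a + (i : ℕ) * D) (a + ((i : ℕ) + 1) * D)) :
    IsPIC n a b p (fun i => pt (a + (i : ℕ) * D + D / 2)) (fun _ => D / 2) := by
  have hball : ∀ (i : Fin n) x, x ∈ Set.Icc (a + (i : ℕ) * D) (a + ((i : ℕ) + 1) * D) →
      pt x ∈ closedBall (pt (a + (i : ℕ) * D + D / 2)) (D / 2) := fun i x hx => by
    rw [pt_mem_closedBall_pt, Real.closedBall_eq_Icc]
    constructor <;> linarith [hx.1, hx.2]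
  refine ⟨fun _ => by positivity, fun x hx => ?_, fun i => hball i _ (hp i)⟩
  obtain ⟨i, hi⟩ := exists_fin_mem_Icc hn hD (x := x) (by rwa [← hlen, add_sub_cancel])
  exact ⟨i, hball i x hi⟩

theorem stmt18 (n : ℕ) (hn : 0 < n) (a b : ℝ) (hab : a < b)
    (p : Fin n → ℝ) (hmono : StrictMono p) :
    (∀ (q : Fin n → EuclideanSpace ℝ (Fin 2)) (rad : Fin n → ℝ),
      IsPIC n a b p q rad →
      Real.pi * (b - a) ^ 2 / (4 * n) ≤ Real.pi * ∑ i, rad i ^ 2) ∧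
    ((∃ (q : Fin n → EuclideanSpace ℝ (Fin 2)) (rad : Fin n → ℝ),
        IsPIC n a b p q rad ∧
        Real.pi * ∑ i, rad i ^ 2 = Real.pi * (b - a) ^ 2 / (4 * n)) ↔
      (∀ i : Fin n, p i ∈ Set.Icc (a + ((i : ℕ) : ℝ) * ((b - a) / n))
        (a + (((i : ℕ) : ℝ) + 1) * ((b - a) / n)))) := by
  set D := (b - a) / n
  have hD : 0 < D := div_pos (sub_pos.2 hab) (Nat.cast_pos.2 hn)
  have hlen : b - a = n * D := (mul_div_cancel₀ _ (Nat.cast_pos.2 hn).ne').symm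
  simp_rw [mul_div_assoc, mul_right_inj' Real.pi_ne_zero]
  refine ⟨fun q rad h => mul_le_mul_of_nonneg_left (h.sq_div_le_sum_sq hab.le) Real.pi_pos.le,
    fun ⟨q, rad, h, hsum⟩ => ?_, fun hp => ?_⟩
  · have hrad := h.rad_eq_of_sum_sq_le hab.le hsum.le
    refine mem_Icc_of_tight_cover hD (c := fun i => q i 0) (fun x hx => ?_) hlen hmono fun i => ?_
    · simpa only [hrad] using h.exists_mem_closedBall hx
    · simpa only [hrad] using h.mem_closedBall i
  · refine ⟨_, _, isPIC_of_mem_Icc hn hD hlen hp, ?_⟩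
    rw [sum_const, card_univ, Fintype.card_fin, nsmul_eq_mul, hlen]
    field_simp
    ring
end

section
/- If a sequence of n touching disks of equal diameter d = (b−a)/n covers [a,b] (the i-th disk having diameter segment [a+(i−1)d, a+id]), and points p_1 < ... < p_n satisfy p_i ∈ [a+(i−1)d, a+id] for all i, then this covering is a point-interval coverage of minimum total area among all point-interval coverages for these points, namely n·(d/2)^2·π. -/
/-!
The touching disks have diameters `[a + i d, a + (i + 1) d]`, which tile `[a, b]`, and the `i`-th of
them contains `p i` by hypothesis. Conversely, the disks of any coverage meet the axis in intervals of
length `2 r i` covering `[a, b]`, so `∑ 2 r i ≥ b - a = n d`; by Cauchy–Schwarz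
`n ∑ r i ^ 2 ≥ (∑ r i) ^ 2 ≥ (n d / 2) ^ 2`, i.e. the total area is at least `n π (d / 2) ^ 2`.
-/

open Finset MeasureTheory Set

lemma dist_pt (x y : ℝ) : dist (pt x) (pt y) = |x - y| := by
  simp [EuclideanSpace.dist_eq, Fin.sum_univ_two, pt, Real.dist_eq, Real.sqrt_sq_eq_abs]

lemma mem_Icc_of_pt_mem_closedBall {x r : ℝ} {q : EuclideanSpace ℝ (Fin 2)}
    (h : pt x ∈ Metric.closedBall q r) : x ∈ Icc (q 0 - r) (q 0 + r) :=
  Real.closedBall_eq_Icc ▸ (PiLp.dist_apply_le (pt x) q 0).trans h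

lemma exists_fin_le_and_le_add_one {n : ℕ} (hn : 0 < n) {t : ℝ} (h0 : 0 ≤ t) (htn : t ≤ n) :
    ∃ k : Fin n, (k : ℝ) ≤ t ∧ t ≤ k + 1 := by
  by_cases hlt : t < n
  · exact ⟨⟨⌊t⌋₊, (Nat.floor_lt h0).2 hlt⟩, Nat.floor_le h0, (Nat.lt_floor_add_one t).le⟩
  · refine ⟨⟨n - 1, Nat.sub_lt hn one_pos⟩, ?_, ?_⟩ <;>
      simp only [Nat.cast_pred hn] <;> linarith

lemma sub_le_sum_sub_of_Icc_subset_iUnion {ι : Type*} [Fintype ι] {a b : ℝ} {l u : ι → ℝ}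
    (hlu : ∀ i, l i ≤ u i) (hcov : Icc a b ⊆ ⋃ i, Icc (l i) (u i)) :
    b - a ≤ ∑ i, (u i - l i) := by
  have hμ : volume (Icc a b) ≤ ∑ i, volume (Icc (l i) (u i)) :=
    (measure_mono hcov).trans (measure_iUnion_fintype_le _ _)
  simp only [Real.volume_Icc] at hμ
  rwa [← ENNReal.ofReal_sum_of_nonneg (fun i _ => sub_nonneg.2 (hlu i)),
    ENNReal.ofReal_le_ofReal_iff (sum_nonneg fun i _ => sub_nonneg.2 (hlu i))] at hμ

lemma card_mul_sq_le_sum_sq {ι : Type*} [Fintype ι] {s : ℝ} {r : ι → ℝ} (hs : 0 ≤ s)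
    (h : Fintype.card ι * s ≤ ∑ i, r i) : Fintype.card ι * s ^ 2 ≤ ∑ i, r i ^ 2 := by
  have hcs := sq_sum_le_card_mul_sum_sq (s := univ) (f := r)
  rw [card_univ] at hcs
  have hsq := pow_le_pow_left₀ (by positivity) h 2
  rcases (Nat.cast_nonneg (α := ℝ) (Fintype.card ι)).eq_or_lt with hc | hc
  · rw [← hc, zero_mul]
    positivity
  · nlinarith

theorem stmt19_general (n : ℕ) (hn : 0 < n) (a b : ℝ) (hab : a < b)
    (d : ℝ) (hd : d = (b - a) / n)
    (p : Fin n → ℝ)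
    (hp : ∀ i : Fin n,
      a + ((i : ℕ) : ℝ) * d ≤ p i ∧ p i ≤ a + (((i : ℕ) : ℝ) + 1) * d) :
    IsPIC n a b p (fun i => pt (a + ((i : ℕ) : ℝ) * d + d / 2)) (fun _ => d / 2) ∧
    (∀ (q : Fin n → EuclideanSpace ℝ (Fin 2)) (rad : Fin n → ℝ),
      IsPIC n a b p q rad →
      (n : ℝ) * (d / 2) ^ 2 * Real.pi ≤ Real.pi * ∑ i, rad i ^ 2) ∧
    Real.pi * ∑ _i : Fin n, (d / 2) ^ 2 = (n : ℝ) * (d / 2) ^ 2 * Real.pi := by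
  have hnR : (0 : ℝ) < n := Nat.cast_pos.mpr hn
  have hd_pos : 0 < d := hd ▸ div_pos (sub_pos.2 hab) hnR
  have hba : b - a = n * d := by rw [hd, mul_div_cancel₀ _ hnR.ne']
  have mem_disk {i : Fin n} {x : ℝ} (h1 : a + i * d ≤ x) (h2 : x ≤ a + (i + 1) * d) :
      pt x ∈ Metric.closedBall (pt (a + i * d + d / 2)) (d / 2) := by
    rw [Metric.mem_closedBall, dist_pt, abs_le]
    constructor <;> linarith
  refine ⟨⟨fun _ => by positivity, fun x ⟨hax, hxb⟩ => ?_, fun i => mem_disk (hp i).1 (hp i).2⟩,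
    fun q rad ⟨hrad, hcov, _⟩ => ?_, by simp [mul_comm]⟩
  · obtain ⟨k, hk1, hk2⟩ := exists_fin_le_and_le_add_one hn
      (div_nonneg (sub_nonneg.2 hax) hd_pos.le) ((div_le_iff₀ hd_pos).2 (by linarith))
    rw [le_div_iff₀ hd_pos] at hk1
    rw [div_le_iff₀ hd_pos] at hk2
    exact ⟨k, mem_disk (by linarith) (by linarith)⟩
  · have hlen : b - a ≤ ∑ i, (q i 0 + rad i - (q i 0 - rad i)) :=
      sub_le_sum_sub_of_Icc_subset_iUnion (fun i => by linarith [hrad i]) fun x hx =>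
        let ⟨i, hi⟩ := hcov x hx
        mem_iUnion.2 ⟨i, mem_Icc_of_pt_mem_closedBall hi⟩
    have hsum : Fintype.card (Fin n) * (d / 2) ≤ ∑ i, rad i := by
      simp only [add_sub_sub_cancel, ← two_mul, ← mul_sum] at hlen
      rw [Fintype.card_fin]
      linarith
    have harea := card_mul_sq_le_sum_sq (by positivity) hsum
    rw [Fintype.card_fin] at harea
    rw [mul_comm Real.pi]
    exact mul_le_mul_of_nonneg_right harea Real.pi_pos.le

theorem stmt19 (n : ℕ) (hn : 0 < n) (a b : ℝ) (hab : a < b)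
    (d : ℝ) (hd : d = (b - a) / n)
    (p : Fin n → ℝ) (hmono : StrictMono p)
    (hp : ∀ i : Fin n,
      a + ((i : ℕ) : ℝ) * d ≤ p i ∧ p i ≤ a + (((i : ℕ) : ℝ) + 1) * d) :
    IsPIC n a b p (fun i => pt (a + ((i : ℕ) : ℝ) * d + d / 2)) (fun _ => d / 2) ∧
    (∀ (q : Fin n → EuclideanSpace ℝ (Fin 2)) (rad : Fin n → ℝ),
      IsPIC n a b p q rad →
      (n : ℝ) * (d / 2) ^ 2 * Real.pi ≤ Real.pi * ∑ i, rad i ^ 2) ∧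
    Real.pi * ∑ _i : Fin n, (d / 2) ^ 2 = (n : ℝ) * (d / 2) ^ 2 * Real.pi :=
  stmt19_general n hn a b hab d hd p hp
end
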